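/- arXiv:2405.12828 — 2 statements merged into one kernel-verified Lean document; each statement's English description precedes it below -/
import Mathlib

section
/- Let R be a symmetric (2,2) double form on a Euclidean n-space satisfying the first Bianchi identity, and (E_α) an orthonormal basis of Λ²V*. Then Σ_α ρ(R(E_α)) · ρ(E_α) = 2R, where · denotes the exterior product of double forms. -/
noncomputable section

open Finset
open scoped RealInnerProductSpace

/-- Euclidean `n`-space. -/
abbrev Evec (n : ℕ) := EuclideanSpace ℝ (Fin n)

/-- The space of `(p,q)` double forms, modeled as real-valued kernels on pairs of tuples. -/
abbrev DF (n p q : ℕ) := (Fin p → Evec n) → (Fin q → Evec n) → ℝ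

/-- `p`-forms. -/
abbrev Form (n p : ℕ) := (Fin p → Evec n) → ℝ

/-- Mixed-degree forms (elements of the full exterior algebra). -/
abbrev MixedForm (n : ℕ) := ∀ p, Form n p

/-- Mixed-bidegree double forms. -/
abbrev MixedDF (n : ℕ) := ∀ p q, DF n p q

/-- The standard orthonormal basis. -/
def ebasis (n : ℕ) (i : Fin n) : Evec n := EuclideanSpace.single i 1

/-- The metric as a `(1,1)` double form. -/
def gdf (n : ℕ) : DF n 1 1 := fun x y => ⟪x 0, y 0⟫

/-- Alternating multilinear predicate for a `p`-form kernel. -/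
def IsAltML {n m : ℕ} (f : Form n m) : Prop :=
  (∀ (x : Fin m → Evec n) (i : Fin m) (c : ℝ) (a b : Evec n),
      f (Function.update x i (c • a + b)) =
        c * f (Function.update x i a) + f (Function.update x i b)) ∧
  (∀ (x : Fin m → Evec n) (i j : Fin m), i ≠ j → x i = x j → f x = 0)

/-- A kernel is a genuine double form iff it is alternating multilinear in both blocks. -/
def IsDF {n p q : ℕ} (ω : DF n p q) : Prop :=
  (∀ y, IsAltML (n := n) fun x => ω x y) ∧ (∀ x, IsAltML (ω x))

/-- Bilinearity of a function of two vectors. -/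
def IsBilin {n : ℕ} (h : Evec n → Evec n → ℝ) : Prop :=
  (∀ y, IsLinearMap ℝ fun x => h x y) ∧ (∀ x, IsLinearMap ℝ (h x))

/-- A 2-form: an alternating bilinear function. -/
def IsAltBilin {n : ℕ} (h : Evec n → Evec n → ℝ) : Prop :=
  IsBilin h ∧ ∀ x, h x x = 0

/-- Exterior product of double forms. -/
def wedge {n p q r s : ℕ} (ω : DF n p q) (η : DF n r s) : DF n (p + r) (q + s) :=
  fun x y =>
    (((p.factorial * r.factorial * q.factorial * s.factorial : ℕ) : ℝ))⁻¹ *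
      ∑ σ : Equiv.Perm (Fin (p + r)), ∑ τ : Equiv.Perm (Fin (q + s)),
        ((Equiv.Perm.sign σ : ℤ) : ℝ) * ((Equiv.Perm.sign τ : ℤ) : ℝ) *
          ω (fun i => x (σ (Fin.castAdd r i))) (fun j => y (τ (Fin.castAdd s j))) *
          η (fun i => x (σ (Fin.natAdd p i))) (fun j => y (τ (Fin.natAdd q j)))

/-- Exterior powers of the metric: `gᵖ`. -/
def gpow (n : ℕ) : (p : ℕ) → DF n p p
  | 0 => fun _ _ => 1
  | p + 1 => wedge (gpow n p) (gdf n)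

/-- The natural inner product of `(p,q)` double forms. -/
def innerDF {n p q : ℕ} (ω η : DF n p q) : ℝ :=
  (((p.factorial * q.factorial : ℕ) : ℝ))⁻¹ *
    ∑ f : Fin p → Fin n, ∑ h : Fin q → Fin n,
      ω (fun i => ebasis n (f i)) (fun j => ebasis n (h j)) *
        η (fun i => ebasis n (f i)) (fun j => ebasis n (h j))

/-- Composition product of double forms: `comp ω₁ ω₂ = ω₁ ∘ ω₂`. -/
def comp {n p q r : ℕ} (ω₁ : DF n p q) (ω₂ : DF n r p) : DF n r q :=
  fun x y =>
    ((p.factorial : ℝ))⁻¹ *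
      ∑ f : Fin p → Fin n,
        ω₂ x (fun i => ebasis n (f i)) * ω₁ (fun i => ebasis n (f i)) y

/-- Transpose of a double form. -/
def transp {n p q : ℕ} (ω : DF n p q) : DF n q p := fun x y => ω y x

/-- Inclusion of bilinear forms as `(1,1)` double forms (the map `ρ`). -/
def rho {n : ℕ} (h : Evec n → Evec n → ℝ) : DF n 1 1 := fun x y => h (x 0) (y 0)

/-- Inner product of 2-forms. -/
def inner2 {n : ℕ} (α β : Evec n → Evec n → ℝ) : ℝ :=
  (2:ℝ)⁻¹ * ∑ i, ∑ j, α (ebasis n i) (ebasis n j) * β (ebasis n i) (ebasis n j)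

/-- The curvature operator of a `(2,2)` double form, acting on 2-forms. -/
def curvOp {n : ℕ} (R : DF n 2 2) (θ : Evec n → Evec n → ℝ) : Evec n → Evec n → ℝ :=
  fun x y => (2:ℝ)⁻¹ * ∑ i, ∑ j,
    θ (ebasis n i) (ebasis n j) * R ![ebasis n i, ebasis n j] ![x, y]

/-- The first Bianchi identity for a `(2,2)` double form. -/
def FirstBianchi {n : ℕ} (R : DF n 2 2) : Prop :=
  ∀ x y z t : Evec n, R ![x, y] ![z, t] + R ![y, z] ![x, t] + R ![z, x] ![y, t] = 0

/-- The Ricci contraction `c R` of a `(2,2)` double form. -/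
def ricci {n : ℕ} (R : DF n 2 2) : DF n 1 1 :=
  fun x y => ∑ i, R ![ebasis n i, x 0] ![ebasis n i, y 0]

/-- Contraction of double forms. -/
def contr {n p q : ℕ} (ω : DF n (p + 1) (q + 1)) : DF n p q :=
  fun x y => ∑ i, ω (Fin.cons (ebasis n i) x) (Fin.cons (ebasis n i) y)

/-- Iterated contraction `cʳ`. -/
def contrIter {n : ℕ} : (r : ℕ) → {p q : ℕ} → DF n (p + r) (q + r) → DF n p q
  | 0, _, _, ω => ω
  | r + 1, _, _, ω => contrIter r (contr ω)

/-- The `(1,1)` double form associated to an endomorphism. -/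
def hdf {n : ℕ} (h : Evec n →ₗ[ℝ] Evec n) : DF n 1 1 := fun x y => ⟪h (x 0), y 0⟫

/-- Left exterior multiplication of a form by a covector `f`. -/
def wedgeC {n p : ℕ} (f : Evec n → ℝ) (α : Form n p) : Form n (p + 1) :=
  fun x => ∑ i : Fin (p + 1), (-1 : ℝ) ^ (i : ℕ) * f (x i) * α (x ∘ i.succAbove)

/-- Interior product of a form by a vector. -/
def iotaV {n : ℕ} : {p : ℕ} → Evec n → Form n p → Form n (p - 1)
  | 0, _, _ => 0
  | _ + 1, v, α => fun x => α (Fin.cons v x)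


/-- Interior product (non-truncating version). -/
def iotaV' {n p : ℕ} (v : Evec n) (α : Form n (p + 1)) : Form n p :=
  fun x => α (Fin.cons v x)

/-- Interior product in the first block (non-truncating version). -/
def iotaL' {n p q : ℕ} (v : Evec n) (ω : DF n (p + 1) q) : DF n p q :=
  fun x y => ω (Fin.cons v x) y

/-- Interior product in the second block (non-truncating version). -/
def iotaR' {n p q : ℕ} (v : Evec n) (ω : DF n p (q + 1)) : DF n p q :=
  fun x y => ω x (Fin.cons v y)

/-- Embedding a homogeneous form into mixed forms. -/
def embF {n : ℕ} (p : ℕ) (α : Form n p) : MixedForm n :=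
  fun d => if h : d = p then cast (show Form n p = Form n d by rw [h]) α else 0

/-- Left Clifford multiplication `v · α` of a homogeneous form. -/
def cliffLone {n p : ℕ} (v : Evec n) (α : Form n p) : MixedForm n :=
  embF (p + 1) (wedgeC (fun u => ⟪v, u⟫) α) - embF (p - 1) (iotaV v α)

/-- Right Clifford multiplication `α · v` of a homogeneous form. -/
def cliffRone {n p : ℕ} (v : Evec n) (α : Form n p) : MixedForm n :=
  (-1 : ℝ) ^ p • (embF (p + 1) (wedgeC (fun u => ⟪v, u⟫) α) + embF (p - 1) (iotaV v α))

/-- Left Clifford multiplication by a vector on mixed forms. -/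
def cliffLv {n : ℕ} (v : Evec n) (ω : MixedForm n) : MixedForm n :=
  fun d => match d with
  | 0 => -(iotaV' v (ω 1))
  | d + 1 => wedgeC (fun u => ⟪v, u⟫) (ω d) - iotaV' v (ω (d + 1 + 1))

/-- Right Clifford multiplication by a vector on mixed forms. -/
def cliffRv {n : ℕ} (v : Evec n) (ω : MixedForm n) : MixedForm n :=
  fun d => match d with
  | 0 => -(iotaV' v (ω 1))
  | d + 1 => (-1 : ℝ) ^ d • (wedgeC (fun u => ⟪v, u⟫) (ω d) + iotaV' v (ω (d + 1 + 1)))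

/-- Left Clifford multiplication by a 2-form on mixed forms. -/
def cliffL2 {n : ℕ} (α : Evec n → Evec n → ℝ) (ω : MixedForm n) : MixedForm n :=
  (2:ℝ)⁻¹ • ∑ i, ∑ j, α (ebasis n i) (ebasis n j) • cliffLv (ebasis n i) (cliffLv (ebasis n j) ω)

/-- Right Clifford multiplication by a 2-form on mixed forms. -/
def cliffR2 {n : ℕ} (α : Evec n → Evec n → ℝ) (ω : MixedForm n) : MixedForm n :=
  (2:ℝ)⁻¹ • ∑ i, ∑ j, α (ebasis n i) (ebasis n j) • cliffRv (ebasis n j) (cliffRv (ebasis n i) ω)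

/-- Interior product by a vector in the first block of a double form. -/
def iotaL {n : ℕ} : {p q : ℕ} → Evec n → DF n p q → DF n (p - 1) q
  | 0, _, _, _ => 0
  | _ + 1, _, v, ω => fun x y => ω (Fin.cons v x) y

/-- Interior product by a vector in the second block of a double form. -/
def iotaR {n : ℕ} : {p q : ℕ} → Evec n → DF n p q → DF n p (q - 1)
  | _, 0, _, _ => 0
  | _, _ + 1, v, ω => fun x y => ω x (Fin.cons v y)

/-- Exterior multiplication by a covector in the first block. -/
def wedgeCL {n p q : ℕ} (f : Evec n → ℝ) (ω : DF n p q) : DF n (p + 1) q :=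
  fun x y => ∑ i : Fin (p + 1), (-1 : ℝ) ^ (i : ℕ) * f (x i) * ω (x ∘ i.succAbove) y

/-- Exterior multiplication by a covector in the second block. -/
def wedgeCR {n p q : ℕ} (f : Evec n → ℝ) (ω : DF n p q) : DF n p (q + 1) :=
  fun x y => ∑ j : Fin (q + 1), (-1 : ℝ) ^ (j : ℕ) * f (y j) * ω x (y ∘ j.succAbove)

/-- Left Clifford multiplication by a vector on the first factor of mixed double forms. -/
def cliffLvL {n : ℕ} (v : Evec n) (Ω : MixedDF n) : MixedDF n :=
  fun p q => match p with
  | 0 => -(iotaL' v (Ω 1 q))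
  | p + 1 => wedgeCL (fun u => ⟪v, u⟫) (Ω p q) - iotaL' v (Ω (p + 1 + 1) q)

/-- Right Clifford multiplication by a vector on the first factor of mixed double forms. -/
def cliffRvL {n : ℕ} (v : Evec n) (Ω : MixedDF n) : MixedDF n :=
  fun p q => match p with
  | 0 => -(iotaL' v (Ω 1 q))
  | p + 1 => (-1 : ℝ) ^ p • (wedgeCL (fun u => ⟪v, u⟫) (Ω p q) + iotaL' v (Ω (p + 1 + 1) q))

/-- Left Clifford multiplication by a vector on the second factor of mixed double forms. -/
def cliffLvR {n : ℕ} (v : Evec n) (Ω : MixedDF n) : MixedDF n :=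
  fun p q => match q with
  | 0 => -(iotaR' v (Ω p 1))
  | q + 1 => wedgeCR (fun u => ⟪v, u⟫) (Ω p q) - iotaR' v (Ω p (q + 1 + 1))

/-- Right Clifford multiplication by a vector on the second factor of mixed double forms. -/
def cliffRvR {n : ℕ} (v : Evec n) (Ω : MixedDF n) : MixedDF n :=
  fun p q => match q with
  | 0 => -(iotaR' v (Ω p 1))
  | q + 1 => (-1 : ℝ) ^ q • (wedgeCR (fun u => ⟪v, u⟫) (Ω p q) + iotaR' v (Ω p (q + 1 + 1)))

/-- Clifford commutator with a covector (1-form) on the first factor. -/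
def adLone {n : ℕ} (v : Evec n) (Ω : MixedDF n) : MixedDF n :=
  cliffLvL v Ω - cliffRvL v Ω

/-- Clifford commutator with a covector (1-form) on the second factor. -/
def adRone {n : ℕ} (v : Evec n) (Ω : MixedDF n) : MixedDF n :=
  cliffLvR v Ω - cliffRvR v Ω

/-- The sharp product of a `(1,1)` double form with a mixed double form. -/
def sharp11 {n : ℕ} (h : Evec n → Evec n → ℝ) (Ω : MixedDF n) : MixedDF n :=
  ∑ i, ∑ j, h (ebasis n i) (ebasis n j) • adLone (ebasis n i) (adRone (ebasis n j) Ω)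

/-- Clifford commutator with the 2-form `v ∧ w` (for orthonormal `v, w`) on the first factor. -/
def adLpair {n : ℕ} (v w : Evec n) (Ω : MixedDF n) : MixedDF n :=
  cliffLvL v (cliffLvL w Ω) - cliffRvL w (cliffRvL v Ω)

/-- Clifford commutator with the 2-form `v ∧ w` (for orthonormal `v, w`) on the second factor. -/
def adRpair {n : ℕ} (v w : Evec n) (Ω : MixedDF n) : MixedDF n :=
  cliffLvR v (cliffLvR w Ω) - cliffRvR w (cliffRvR v Ω)

/-- Clifford commutator with a 2-form on the first factor. -/
def adL2 {n : ℕ} (α : Evec n → Evec n → ℝ) (Ω : MixedDF n) : MixedDF n :=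
  (2:ℝ)⁻¹ • ∑ i, ∑ j, α (ebasis n i) (ebasis n j) • adLpair (ebasis n i) (ebasis n j) Ω

/-- Clifford commutator with a 2-form on the second factor. -/
def adR2 {n : ℕ} (α : Evec n → Evec n → ℝ) (Ω : MixedDF n) : MixedDF n :=
  (2:ℝ)⁻¹ • ∑ i, ∑ j, α (ebasis n i) (ebasis n j) • adRpair (ebasis n i) (ebasis n j) Ω

/-- The sharp product of a `(2,2)` double form with a mixed double form. -/
def sharpR {n : ℕ} (R : DF n 2 2) (Ω : MixedDF n) : MixedDF n :=
  (4:ℝ)⁻¹ • ∑ i, ∑ j, ∑ k, ∑ l,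
    R ![ebasis n i, ebasis n j] ![ebasis n k, ebasis n l] •
      adLpair (ebasis n i) (ebasis n j) (adRpair (ebasis n k) (ebasis n l) Ω)

/-- Embedding of a homogeneous double form into mixed double forms. -/
def embDF {n : ℕ} (p q : ℕ) (ω : DF n p q) : MixedDF n :=
  fun p' q' =>
    if h : p' = p ∧ q' = q then cast (show DF n p q = DF n p' q' by rw [h.1, h.2]) ω else 0

/-- Interior product of a double form by a `(1,1)` double form. -/
def iotaH {n : ℕ} : {p q : ℕ} → (Evec n → Evec n → ℝ) → DF n p q → DF n (p - 1) (q - 1)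
  | 0, _, _, _ => 0
  | _ + 1, 0, _, _ => 0
  | _ + 1, _ + 1, h, ω => fun x y =>
      ∑ i, ∑ j, h (ebasis n i) (ebasis n j) *
        ω (Fin.cons (ebasis n i) x) (Fin.cons (ebasis n j) y)

/-- Contraction of a double form, defined in every bidegree. -/
def contrAny {n : ℕ} : {p q : ℕ} → DF n p q → DF n (p - 1) (q - 1)
  | 0, _, _ => 0
  | _ + 1, 0, _ => 0
  | _ + 1, _ + 1, ω => fun x y =>
      ∑ i, ω (Fin.cons (ebasis n i) x) (Fin.cons (ebasis n i) y)

/-- The first Bianchi sum `𝔖`. -/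
def bianchiT {n : ℕ} : {p q : ℕ} → DF n p q → DF n (p + 1) (q - 1)
  | _, 0, _ => 0
  | p, _ + 1, ω => fun x y =>
      ∑ i, ∑ a : Fin (p + 1), (-1 : ℝ) ^ (a : ℕ) * ⟪ebasis n i, x a⟫ *
        ω (x ∘ a.succAbove) (Fin.cons (ebasis n i) y)

/-- The adjoint first Bianchi sum `𝔖̃`. -/
def bianchiAdjT {n : ℕ} : {p q : ℕ} → DF n p q → DF n (p - 1) (q + 1)
  | 0, _, _ => 0
  | _ + 1, q, ω => fun x y =>
      ∑ i, ∑ b : Fin (q + 1), (-1 : ℝ) ^ (b : ℕ) * ⟪ebasis n i, y b⟫ *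
        ω (Fin.cons (ebasis n i) x) (y ∘ b.succAbove)

/-- `g^{q-1} ρ(α) / (q-1)!`, the derivation extension of a `(1,1)` double form, with the
convention that it vanishes for `q = 0` (i.e. `g⁻¹ = 0`). -/
def gPowRho {n : ℕ} : (q : ℕ) → (Evec n → Evec n → ℝ) → DF n q q
  | 0, _ => 0
  | q + 1, α => ((q.factorial : ℝ))⁻¹ • wedge (gpow n q) (rho α)

/-- A 2-form is expressible in terms of `m` covectors. -/
def ExprBy {n : ℕ} (E : Evec n → Evec n → ℝ) (m : ℕ) : Prop :=
  ∃ (w : Fin m → Evec n) (c : Fin m → Fin m → ℝ), ∀ x y,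
    E x y = ∑ a, ∑ b, c a b * (⟪w a, x⟫ * ⟪w b, y⟫ - ⟪w a, y⟫ * ⟪w b, x⟫)

/-!
Writing `θ_{ab} := R(·,·; a,b)`, the curvature operator satisfies `R(E_α)(a,b) = ⟨θ_{ab}, E_α⟩`,
so completeness of `(E_α)` gives `∑_α R(E_α)(a,b) E_α(c,d) = R(c,d; a,b)`. Expanding the exterior
product of two `(1,1)` double forms, the left-hand side at `(x₀,x₁; y₀,y₁)` becomes a signed sum
of four such terms, which symmetry of `R` pairs into `2 (R(x₀,y₀; x₁,y₁) - R(x₀,y₁; x₁,y₀))`;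
the first Bianchi identity turns this into `2 R(x₀,x₁; y₀,y₁)`.
-/

section DoubleForms

variable {n : ℕ}

lemma IsAltML.isAltBilin {f : Form n 2} (hf : IsAltML f) : IsAltBilin fun u v => f ![u, v] := by
  obtain ⟨hlin, halt⟩ := hf
  have update_zero (u v z : Evec n) : Function.update ![u, v] 0 z = ![z, v] := by
    funext i; fin_cases i <;> simp
  have update_one (u v z : Evec n) : Function.update ![u, v] 1 z = ![u, z] := by
    funext i; fin_cases i <;> simp
  refine ⟨⟨fun v => ?_, fun u => ?_⟩, fun u => halt ![u, u] 0 1 (by decide) rfl⟩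
  · have h0 : f ![0, v] = 0 := by
      simpa [update_zero] using hlin ![0, v] 0 1 0 0
    exact ⟨fun u u' => by simpa [update_zero] using hlin ![u, v] 0 1 u u',
      fun c u => by simpa [update_zero, h0] using hlin ![u, v] 0 c u 0⟩
  · have h0 : f ![u, 0] = 0 := by
      simpa [update_one] using hlin ![u, 0] 1 1 0 0
    exact ⟨fun v v' => by simpa [update_one] using hlin ![u, v] 1 1 v v',
      fun c v => by simpa [update_one, h0] using hlin ![u, v] 1 c v 0⟩

lemma IsAltBilin.apply_eq_neg {h : Evec n → Evec n → ℝ} (hh : IsAltBilin h) (u v : Evec n) :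
    h u v = -h v u := by
  have hsum : h (u + v) (u + v) = h u u + h u v + (h v u + h v v) := by
    rw [(hh.1.1 _).map_add, (hh.1.2 u).map_add, (hh.1.2 v).map_add]
  linarith [hh.2 (u + v), hh.2 u, hh.2 v]

lemma sum_perm_fin_two {M : Type*} [AddCommMonoid M] (f : Equiv.Perm (Fin 2) → M) :
    ∑ σ, f σ = f 1 + f (Equiv.swap 0 1) := by
  rw [show (univ : Finset (Equiv.Perm (Fin 2))) = {1, Equiv.swap 0 1} by decide,
    sum_pair (by decide)]

lemma wedge_rho_rho_apply (h₁ h₂ : Evec n → Evec n → ℝ) (x y : Fin 2 → Evec n) :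
    wedge (rho h₁) (rho h₂) x y =
      h₁ (x 0) (y 0) * h₂ (x 1) (y 1) - h₁ (x 0) (y 1) * h₂ (x 1) (y 0)
        - h₁ (x 1) (y 0) * h₂ (x 0) (y 1) + h₁ (x 1) (y 1) * h₂ (x 0) (y 0) := by
  have hcast : Fin.castAdd 1 (0 : Fin 1) = 0 := rfl
  unfold wedge rho
  rw [sum_perm_fin_two, sum_perm_fin_two, sum_perm_fin_two]
  simp only [Nat.factorial_one, mul_one, Nat.cast_one, inv_one, one_mul, Equiv.Perm.sign_one,
    Units.val_one, Int.cast_one, hcast, Equiv.Perm.coe_one, id_eq, Fin.natAdd_eq_addNat,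
    Fin.addNat_one, Fin.succ_zero_eq_one, Equiv.Perm.sign_swap (show (0 : Fin 2) ≠ 1 by decide),
    Units.val_neg, Int.cast_neg, mul_neg, neg_mul, neg_neg, Equiv.swap_apply_left,
    Equiv.swap_apply_right]
  ring

lemma curvOp_apply_eq_inner2 (R : DF n 2 2) (θ : Evec n → Evec n → ℝ) (a b : Evec n) :
    curvOp R θ a b = inner2 (fun u v => R ![u, v] ![a, b]) θ := by
  simp only [curvOp, inner2, mul_comm (θ _ _)]

lemma sum_curvOp_mul_apply {ι : Type*} [Fintype ι] {R : DF n 2 2} (hR : IsDF R)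
    {E : ι → Evec n → Evec n → ℝ}
    (hCompl : ∀ θ : Evec n → Evec n → ℝ, IsAltBilin θ →
      ∀ x y, θ x y = ∑ α, inner2 θ (E α) * E α x y)
    (a b c d : Evec n) :
    ∑ α, curvOp R (E α) a b * E α c d = R ![c, d] ![a, b] := by
  simp only [curvOp_apply_eq_inner2]
  exact (hCompl _ (hR.1 ![a, b]).isAltBilin c d).symm

lemma FirstBianchi.apply_sub_apply {R : DF n 2 2} (hR : IsDF R) (hsym : transp R = R)
    (hbianchi : FirstBianchi R) (a b c d : Evec n) :
    R ![a, c] ![b, d] - R ![a, d] ![b, c] = R ![a, b] ![c, d] := by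
  have hskew (u v : Evec n) (A : Fin 2 → Evec n) : R ![u, v] A = -R ![v, u] A :=
    (hR.1 A).isAltBilin.apply_eq_neg u v
  have hswap : R ![b, c] ![a, d] = R ![a, d] ![b, c] := congrFun (congrFun hsym _) _
  linarith [hbianchi a c b d, hskew c b ![a, d], hskew b a ![c, d]]

end DoubleForms

theorem statement7_general (n : ℕ) (R : DF n 2 2) (hR : IsDF R) (hsym : transp R = R)
    (hbianchi : FirstBianchi R)
    (E : Fin (n * (n - 1) / 2) → (Evec n → Evec n → ℝ))
    (hCompl : ∀ θ : Evec n → Evec n → ℝ, IsAltBilin θ →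
      ∀ x y, θ x y = ∑ α, inner2 θ (E α) * E α x y) :
    (∑ α, wedge (rho (curvOp R (E α))) (rho (E α))) = (2 : ℝ) • R := by
  funext x y
  have hswap (A B : Fin 2 → Evec n) : R A B = R B A := congrFun (congrFun hsym _) _
  have heta : R ![x 0, x 1] ![y 0, y 1] = R x y := by
    congr <;> funext i <;> fin_cases i <;> rfl
  simp only [Finset.sum_apply, Pi.smul_apply, smul_eq_mul, wedge_rho_rho_apply,
    sum_add_distrib, sum_sub_distrib, sum_curvOp_mul_apply hR hCompl]
  rw [hswap ![x 1, y 1], hswap ![x 1, y 0]]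
  linarith [hbianchi.apply_sub_apply hR hsym (x 0) (x 1) (y 0) (y 1)]

/-- For a symmetric `(2,2)` double form `R` satisfying the first Bianchi
identity, and any orthonormal basis `(E_α)` of `Λ²V*`:
`∑_α ρ(R(E_α)) · ρ(E_α) = 2 R` (exterior product). -/
theorem statement7 (n : ℕ) (R : DF n 2 2) (hR : IsDF R) (hsym : transp R = R)
    (hbianchi : FirstBianchi R)
    (E : Fin (n * (n - 1) / 2) → (Evec n → Evec n → ℝ))
    (hE : ∀ α, IsAltBilin (E α))
    (hON : ∀ α β, inner2 (E α) (E β) = if α = β then 1 else 0)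
    (hCompl : ∀ θ : Evec n → Evec n → ℝ, IsAltBilin θ →
      ∀ x y, θ x y = ∑ α, inner2 θ (E α) * E α x y) :
    (∑ α, wedge (rho (curvOp R (E α))) (rho (E α))) = (2 : ℝ) • R :=
  statement7_general n R hR hsym hbianchi E hCompl
end
end

section
/- Let h be a (1,1) double form on a Euclidean space and ω a (p,p) double form with p even; then h # ω = 4 ι_h ω, where # is the sharp product induced by the Clifford commutator and ι_h is the interior product with h. If p is odd, then h # ω = 4 h·ω (exterior product). -/
noncomputable section

open Finset
open scoped RealInnerProductSpace

/-!
For a vector `v` and a form `α` of degree `d`, Clifford multiplication gives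
`v·α = v∧α - ι_v α` and `α·v = (-1)^d (v∧α + ι_v α)`, so the commutator `[v, α]` is
`-2 ι_v α` when `d` is even and `2 v∧α` when `d` is odd. Since
`h # ω = ∑ h(eᵢ, eⱼ) [eᵢ, [eⱼ, ω]]` (commutators in the first and second factor), for `p` even
this is `4 ∑ h(eᵢ, eⱼ) ι_{eᵢ} ι_{eⱼ} ω = 4 ι_h ω`, and for `p` odd it is
`4 ∑ h(eᵢ, eⱼ) eᵢ ∧ eⱼ ∧ ω`. Expanding both this and `h·ω` along the first vector of each
block gives the same sum `∑ₐ,ᵦ (-1)^(a+b) h(xₐ, yᵦ) ω(x̂ₐ, ŷᵦ)`; on the side of `h·ω` this uses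
that each permutation of `Fin (p+1)` is determined by its value at `0` and a permutation of
the remaining entries.
-/

section Alternating

variable {n : ℕ}

def IsAltML.toAlternatingMap {m : ℕ} {f : Form n m} (hf : IsAltML f) :
    Evec n [⋀^Fin m]→ₗ[ℝ] ℝ where
  toFun := f
  map_update_add' {inst} X i a b := by
    obtain rfl := Subsingleton.elim inst (instDecidableEqFin m)
    simpa using hf.1 X i 1 a b
  map_update_smul' {inst} X i c a := by
    obtain rfl := Subsingleton.elim inst (instDecidableEqFin m)
    have h0 : f (Function.update X i 0) = 0 := by simpa using hf.1 X i 1 0 0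
    simpa [h0] using hf.1 X i c a 0
  map_eq_zero_of_eq' X i j hX hij := hf.2 X i j hij hX

lemma IsAltML.apply_comp_perm {m : ℕ} {f : Form n m} (hf : IsAltML f) (X : Fin m → Evec n)
    (π : Equiv.Perm (Fin m)) : f (X ∘ π) = (Equiv.Perm.sign π : ℝ) * f X := by
  have h := hf.toAlternatingMap.map_perm X π
  rw [Units.smul_def, zsmul_eq_mul] at h
  exact h

end Alternating

section PermSum

open Equiv

def succAbovePerm {p : ℕ} (a : Fin (p + 1)) (π : Perm (Fin p)) : Perm (Fin (p + 1)) :=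
  a.cycleRange.symm * Perm.decomposeFin.symm (0, π)

@[simp]
lemma succAbovePerm_zero {p : ℕ} (a : Fin (p + 1)) (π : Perm (Fin p)) :
    succAbovePerm a π 0 = a := by
  simp [succAbovePerm, Perm.decomposeFin_symm_apply_zero, Fin.cycleRange_symm_zero]

@[simp]
lemma succAbovePerm_succ {p : ℕ} (a : Fin (p + 1)) (π : Perm (Fin p)) (i : Fin p) :
    succAbovePerm a π i.succ = a.succAbove (π i) := by
  simp [succAbovePerm, Perm.decomposeFin_symm_apply_succ, Fin.cycleRange_symm_succ]

lemma sign_succAbovePerm {p : ℕ} (a : Fin (p + 1)) (π : Perm (Fin p)) :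
    (Perm.sign (succAbovePerm a π) : ℝ) = (-1) ^ (a : ℕ) * Perm.sign π := by
  simp [succAbovePerm, Perm.decomposeFin.symm_sign, Fin.sign_cycleRange]

lemma bijective_succAbovePerm (p : ℕ) :
    Function.Bijective fun aπ : Fin (p + 1) × Perm (Fin p) => succAbovePerm aπ.1 aπ.2 := by
  rw [Fintype.bijective_iff_injective_and_card]
  refine ⟨fun ⟨a, π⟩ ⟨b, τ⟩ hσ => ?_, by simp [Fintype.card_perm, Nat.factorial_succ]⟩
  have hab : a = b := by simpa using congr($hσ 0)
  subst hab
  refine Prod.ext rfl (Equiv.ext fun i => Fin.succAbove_right_injective (p := a) ?_)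
  simpa using congr($hσ i.succ)

lemma sum_perm_sign_mul_apply_succ {p : ℕ} {β : Type*} (g : Fin (p + 1) → (Fin p → β) → ℝ)
    (hg : ∀ a Y (π : Perm (Fin p)), g a (Y ∘ π) = Perm.sign π * g a Y) (X : Fin (p + 1) → β) :
    ∑ σ : Perm (Fin (p + 1)), (Perm.sign σ : ℝ) * g (σ 0) (fun i => X (σ i.succ))
      = p.factorial * ∑ a : Fin (p + 1), (-1) ^ (a : ℕ) * g a (X ∘ a.succAbove) := by
  rw [← (bijective_succAbovePerm p).sum_comp, Fintype.sum_prod_type, Finset.mul_sum]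
  refine Finset.sum_congr rfl fun a _ => ?_
  have hsq (π : Perm (Fin p)) : (Perm.sign π : ℝ) * Perm.sign π = 1 := by
    rw [← Int.cast_mul, ← Units.val_mul, Int.units_mul_self, Units.val_one, Int.cast_one]
  have hπ (π : Perm (Fin p)) : g a (fun i => X (a.succAbove (π i)))
      = Perm.sign π * g a (X ∘ a.succAbove) := hg a (X ∘ a.succAbove) π
  calc _ = ∑ π : Perm (Fin p), (-1) ^ (a : ℕ) * g a (X ∘ a.succAbove) :=
        Finset.sum_congr rfl fun π _ => by
          simp only [succAbovePerm_zero, succAbovePerm_succ, sign_succAbovePerm, hπ]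
          linear_combination (-1) ^ (a : ℕ) * g a (X ∘ a.succAbove) * hsq π
    _ = _ := by simp [Fintype.card_perm]

end PermSum

section Basis

variable {n : ℕ}

lemma sum_inner_ebasis_smul (u : Evec n) : ∑ i, ⟪ebasis n i, u⟫ • ebasis n i = u := by
  simpa [ebasis, EuclideanSpace.basisFun_apply] using
    (EuclideanSpace.basisFun (Fin n) ℝ).sum_repr' u

lemma IsBilin.eq_sum_ebasis {h : Evec n → Evec n → ℝ} (hh : IsBilin h) (u w : Evec n) :
    h u w = ∑ i, ∑ j, h (ebasis n i) (ebasis n j) * (⟪ebasis n i, u⟫ * ⟪ebasis n j, w⟫) := by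
  let B : Evec n →ₗ[ℝ] Evec n →ₗ[ℝ] ℝ := LinearMap.mk₂ ℝ h
    (fun a b c => (hh.1 c).map_add a b) (fun c a b => (hh.1 b).map_smul c a)
    (fun a b c => (hh.2 a).map_add b c) (fun c a b => (hh.2 a).map_smul c b)
  change B u w = _
  conv_lhs => rw [← sum_inner_ebasis_smul u, ← sum_inner_ebasis_smul w]
  simp only [map_sum, map_smul, LinearMap.sum_apply, LinearMap.smul_apply, smul_eq_mul,
    Finset.mul_sum]
  rw [Finset.sum_comm]
  exact Finset.sum_congr rfl fun i _ => Finset.sum_congr rfl fun j _ => by simp [B]; ring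

end Basis

section Embedding

variable {n : ℕ}

@[simp]
lemma embDF_self {P Q : ℕ} (ω : DF n P Q) : embDF P Q ω P Q = ω := by
  simp [embDF]

lemma embDF_of_ne {P Q p q : ℕ} (ω : DF n P Q) (hne : ¬(p = P ∧ q = Q)) :
    embDF P Q ω p q = 0 :=
  dif_neg hne

def embDFₗ (P Q : ℕ) : DF n P Q →ₗ[ℝ] MixedDF n where
  toFun := embDF P Q
  map_add' ω η := by
    funext p q
    by_cases hpq : p = P ∧ q = Q
    · obtain ⟨rfl, rfl⟩ := hpq
      simp
    · simp [embDF_of_ne _ hpq]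
  map_smul' c ω := by
    funext p q
    by_cases hpq : p = P ∧ q = Q
    · obtain ⟨rfl, rfl⟩ := hpq
      simp
    · simp [embDF_of_ne _ hpq]

lemma embDF_zero {P Q : ℕ} : embDF P Q (0 : DF n P Q) = 0 :=
  (embDFₗ P Q).map_zero

lemma embDF_smul {P Q : ℕ} (c : ℝ) (ω : DF n P Q) : embDF P Q (c • ω) = c • embDF P Q ω :=
  (embDFₗ P Q).map_smul c ω

lemma embDF_sum {P Q : ℕ} {ι : Type*} (s : Finset ι) (ω : ι → DF n P Q) :
    embDF P Q (∑ i ∈ s, ω i) = ∑ i ∈ s, embDF P Q (ω i) :=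
  map_sum (embDFₗ P Q) ω s

lemma embDF_congr {P Q P' Q' : ℕ} (hP : P = P') (hQ : Q = Q') (ω : DF n P Q) :
    embDF P Q ω = embDF P' Q' (fun x y => ω (x ∘ Fin.cast hP) (y ∘ Fin.cast hQ)) := by
  subst hP hQ
  rfl

end Embedding

section CliffordCommutator

variable {n : ℕ}

@[simp]
lemma wedgeCR_zero {p q : ℕ} (f : Evec n → ℝ) : wedgeCR f (0 : DF n p q) = 0 := by
  funext x y
  simp [wedgeCR]

@[simp]
lemma wedgeCL_zero {p q : ℕ} (f : Evec n → ℝ) : wedgeCL f (0 : DF n p q) = 0 := by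
  funext x y
  simp [wedgeCL]

@[simp]
lemma iotaR'_zero {p q : ℕ} (v : Evec n) : iotaR' v (0 : DF n p (q + 1)) = 0 := rfl

@[simp]
lemma iotaL'_zero {p q : ℕ} (v : Evec n) : iotaL' v (0 : DF n (p + 1) q) = 0 := rfl

lemma adRone_apply_zero (v : Evec n) (Ω : MixedDF n) (p : ℕ) : adRone v Ω p 0 = 0 := by
  simp [adRone, cliffLvR, cliffRvR]

lemma adRone_apply_succ (v : Evec n) (Ω : MixedDF n) (p q : ℕ) :
    adRone v Ω p (q + 1) = (1 - (-1) ^ q : ℝ) • wedgeCR (fun u => ⟪v, u⟫) (Ω p q)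
      - (1 + (-1) ^ q : ℝ) • iotaR' v (Ω p (q + 2)) := by
  simp only [adRone, cliffLvR, cliffRvR, Pi.sub_apply, sub_smul, add_smul, one_smul, smul_add]
  abel

lemma adLone_apply_zero (v : Evec n) (Ω : MixedDF n) (q : ℕ) : adLone v Ω 0 q = 0 := by
  simp [adLone, cliffLvL, cliffRvL]

lemma adLone_apply_succ (v : Evec n) (Ω : MixedDF n) (p q : ℕ) :
    adLone v Ω (p + 1) q = (1 - (-1) ^ p : ℝ) • wedgeCL (fun u => ⟪v, u⟫) (Ω p q)
      - (1 + (-1) ^ p : ℝ) • iotaL' v (Ω (p + 2) q) := by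
  simp only [adLone, cliffLvL, cliffRvL, Pi.sub_apply, sub_smul, add_smul, one_smul, smul_add]
  abel

lemma adRone_embDF_of_odd {P Q : ℕ} (hQ : Odd Q) (v : Evec n) (ω : DF n P Q) :
    adRone v (embDF P Q ω) = embDF P (Q + 1) ((2 : ℝ) • wedgeCR (fun u => ⟪v, u⟫) ω) := by
  funext p q
  rcases q with _ | k
  · rw [adRone_apply_zero, embDF_of_ne _ (by omega)]
  rw [adRone_apply_succ]
  by_cases hk : p = P ∧ k = Q
  · obtain ⟨rfl, rfl⟩ := hk
    simp (disch := omega) [embDF_of_ne, hQ.neg_one_pow]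
    norm_num
  by_cases hk' : p = P ∧ k + 2 = Q
  · obtain ⟨rfl, rfl⟩ := hk'
    have hk : Odd k := by simpa [Nat.odd_add] using hQ
    simp (disch := omega) [embDF_of_ne, hk.neg_one_pow]
  · simp (disch := omega) [embDF_of_ne]

lemma adRone_embDF_of_even {P Q : ℕ} (hQ : Even Q) (v : Evec n) (ω : DF n P Q) :
    adRone v (embDF P Q ω) = embDF P (Q - 1) ((-2 : ℝ) • iotaR v ω) := by
  funext p q
  rcases q with _ | k
  · rw [adRone_apply_zero]
    rcases Q with _ | Q
    · simp [iotaR, embDF_zero]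
    · rw [embDF_of_ne _ (by grind)]
  rw [adRone_apply_succ]
  by_cases hk : p = P ∧ k = Q
  · obtain ⟨rfl, rfl⟩ := hk
    simp (disch := omega) [embDF_of_ne, hQ.neg_one_pow]
  by_cases hk' : p = P ∧ k + 2 = Q
  · obtain ⟨rfl, rfl⟩ := hk'
    have hk : Even k := by simpa [Nat.even_add] using hQ
    simp (disch := omega) [embDF_of_ne, hk.neg_one_pow, iotaR, one_add_one_eq_two]
    rfl
  · simp (disch := omega) [embDF_of_ne]

lemma adLone_embDF_of_even {P Q : ℕ} (hP : Even P) (v : Evec n) (ω : DF n P Q) :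
    adLone v (embDF P Q ω) = embDF (P - 1) Q ((-2 : ℝ) • iotaL v ω) := by
  funext p q
  rcases p with _ | k
  · rw [adLone_apply_zero]
    rcases P with _ | P
    · simp [iotaL, embDF_zero]
    · rw [embDF_of_ne _ (by grind)]
  rw [adLone_apply_succ]
  by_cases hk : k = P ∧ q = Q
  · obtain ⟨rfl, rfl⟩ := hk
    simp (disch := omega) [embDF_of_ne, hP.neg_one_pow]
  by_cases hk' : k + 2 = P ∧ q = Q
  · obtain ⟨rfl, rfl⟩ := hk'
    have hk : Even k := by simpa [Nat.even_add] using hP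
    simp (disch := omega) [embDF_of_ne, hk.neg_one_pow, iotaL, one_add_one_eq_two]
    rfl
  · simp (disch := omega) [embDF_of_ne]

lemma adLone_embDF_of_odd {P Q : ℕ} (hP : Odd P) (v : Evec n) (ω : DF n P Q) :
    adLone v (embDF P Q ω) = embDF (P + 1) Q ((2 : ℝ) • wedgeCL (fun u => ⟪v, u⟫) ω) := by
  funext p q
  rcases p with _ | k
  · rw [adLone_apply_zero, embDF_of_ne _ (by omega)]
  rw [adLone_apply_succ]
  by_cases hk : k = P ∧ q = Q
  · obtain ⟨rfl, rfl⟩ := hk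
    simp (disch := omega) [embDF_of_ne, hP.neg_one_pow]
    norm_num
  by_cases hk' : k + 2 = P ∧ q = Q
  · obtain ⟨rfl, rfl⟩ := hk'
    have hk : Odd k := by simpa [Nat.odd_add] using hP
    simp (disch := omega) [embDF_of_ne, hk.neg_one_pow]
  · simp (disch := omega) [embDF_of_ne]

end CliffordCommutator

section Interior

variable {n : ℕ}

lemma iotaL_smul {p q : ℕ} (v : Evec n) (c : ℝ) (ω : DF n p q) :
    iotaL v (c • ω) = c • iotaL v ω := by
  rcases p with _ | p
  · simp [iotaL]
  · rfl

lemma iotaH_eq_sum {p q : ℕ} (h : Evec n → Evec n → ℝ) (ω : DF n p q) :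
    iotaH h ω
      = ∑ i, ∑ j, h (ebasis n i) (ebasis n j) • iotaL (ebasis n i) (iotaR (ebasis n j) ω) := by
  rcases p with _ | p
  · simp [iotaH, iotaL]
  rcases q with _ | q
  · funext x y
    simp [iotaH, iotaR, iotaL]
  · funext x y
    simp [iotaH, iotaL, iotaR, Finset.sum_apply]

lemma sharp11_embDF_of_even {P Q : ℕ} (hP : Even P) (hQ : Even Q)
    (h : Evec n → Evec n → ℝ) (ω : DF n P Q) :
    sharp11 h (embDF P Q ω) = (4 : ℝ) • embDF (P - 1) (Q - 1) (iotaH h ω) := by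
  simp only [sharp11, adRone_embDF_of_even hQ, adLone_embDF_of_even hP, iotaH_eq_sum]
  simp only [iotaL_smul, embDF_sum, embDF_smul, Finset.smul_sum, smul_smul]
  norm_num [mul_comm]

end Interior

section Exterior

variable {n : ℕ}

open Equiv

lemma wedgeCL_smul {p q : ℕ} (f : Evec n → ℝ) (c : ℝ) (ω : DF n p q) :
    wedgeCL f (c • ω) = c • wedgeCL f ω := by
  funext x y
  simp only [wedgeCL, Pi.smul_apply, smul_eq_mul, Finset.mul_sum]
  exact Finset.sum_congr rfl fun i _ => by ring

lemma sum_wedgeCL_wedgeCR_apply {P Q : ℕ} {h : Evec n → Evec n → ℝ} (hh : IsBilin h)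
    (ω : DF n P Q) (x : Fin (P + 1) → Evec n) (y : Fin (Q + 1) → Evec n) :
    (∑ i, ∑ j, h (ebasis n i) (ebasis n j) •
        wedgeCL (fun u => ⟪ebasis n i, u⟫) (wedgeCR (fun u => ⟪ebasis n j, u⟫) ω)) x y
      = ∑ a : Fin (P + 1), ∑ b : Fin (Q + 1), (-1) ^ (a : ℕ) * (-1) ^ (b : ℕ) * h (x a) (y b) *
          ω (x ∘ a.succAbove) (y ∘ b.succAbove) := by
  simp only [Finset.sum_apply, Pi.smul_apply, wedgeCL, wedgeCR, hh.eq_sum_ebasis (x _) (y _),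
    smul_eq_mul, Finset.mul_sum, Finset.sum_mul]
  simp only [Finset.sum_comm (γ := Fin n) (α := Fin (P + 1)),
    Finset.sum_comm (γ := Fin n) (α := Fin (Q + 1))]
  refine Finset.sum_congr rfl fun a _ => Finset.sum_congr rfl fun b _ => ?_
  exact Finset.sum_congr rfl fun i _ => Finset.sum_congr rfl fun j _ => by ring

lemma wedge_rho_apply_cast_eq_sum_perm {P Q : ℕ} (h : Evec n → Evec n → ℝ) (ω : DF n P Q)
    (x : Fin (P + 1) → Evec n) (y : Fin (Q + 1) → Evec n) :
    wedge (rho h) ω (x ∘ Fin.cast (add_comm 1 P)) (y ∘ Fin.cast (add_comm 1 Q))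
      = ((P.factorial * Q.factorial : ℕ) : ℝ)⁻¹ * ∑ σ : Perm (Fin (P + 1)), Perm.sign σ *
          ∑ τ : Perm (Fin (Q + 1)), Perm.sign τ *
            (h (x (σ 0)) (y (τ 0)) * ω (fun i => x (σ i.succ)) (fun j => y (τ j.succ))) := by
  have hzero (m : ℕ) (i : Fin 1) : Fin.cast (add_comm 1 m) (Fin.castAdd m i) = 0 := by
    ext; simp
  have hsucc (m : ℕ) (i : Fin m) : Fin.cast (add_comm 1 m) (Fin.natAdd 1 i) = i.succ := by
    ext; simp
  simp only [wedge, Nat.factorial_one, one_mul, mul_one]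
  congr 1
  rw [← (finCongr (add_comm P 1)).permCongr.sum_comp]
  refine Finset.sum_congr rfl fun σ _ => ?_
  rw [← (finCongr (add_comm Q 1)).permCongr.sum_comp, Finset.mul_sum]
  refine Finset.sum_congr rfl fun τ _ => ?_
  simp [Perm.sign_permCongr, rho, hzero, hsucc]
  ring

lemma wedge_rho_apply_cast {P Q : ℕ} (h : Evec n → Evec n → ℝ) {ω : DF n P Q} (hω : IsDF ω)
    (x : Fin (P + 1) → Evec n) (y : Fin (Q + 1) → Evec n) :
    wedge (rho h) ω (x ∘ Fin.cast (add_comm 1 P)) (y ∘ Fin.cast (add_comm 1 Q))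
      = ∑ a : Fin (P + 1), ∑ b : Fin (Q + 1), (-1) ^ (a : ℕ) * (-1) ^ (b : ℕ) * h (x a) (y b) *
          ω (x ∘ a.succAbove) (y ∘ b.succAbove) := by
  have hτ (X : Fin P → Evec n) (a : Fin (P + 1)) :
      ∑ τ : Perm (Fin (Q + 1)), (Perm.sign τ : ℝ) *
          (h (x a) (y (τ 0)) * ω X (fun j => y (τ j.succ)))
        = Q.factorial * ∑ b : Fin (Q + 1), (-1) ^ (b : ℕ) *
          (h (x a) (y b) * ω X (y ∘ b.succAbove)) :=
    sum_perm_sign_mul_apply_succ (fun b Y => h (x a) (y b) * ω X Y)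
      (fun b Y π => by rw [(hω.2 X).apply_comp_perm]; ring) y
  have hσ := sum_perm_sign_mul_apply_succ
    (fun a X => ∑ b : Fin (Q + 1), (-1) ^ (b : ℕ) * (h (x a) (y b) * ω X (y ∘ b.succAbove)))
    (fun a X π => by
      simp only [Finset.mul_sum]
      exact Finset.sum_congr rfl fun b _ => by
        rw [show ω (X ∘ π) (y ∘ b.succAbove) = _ from (hω.1 _).apply_comp_perm X π]; ring) x
  rw [wedge_rho_apply_cast_eq_sum_perm]
  simp only [hτ, mul_left_comm _ (Q.factorial : ℝ), ← Finset.mul_sum]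
  have hfac : (Q.factorial : ℝ) * ((P.factorial * Q.factorial : ℕ) : ℝ)⁻¹ * P.factorial = 1 := by
    push_cast
    field_simp
  rw [hσ, ← mul_assoc, ← mul_assoc, hfac, one_mul]
  simp only [Finset.mul_sum]
  exact Finset.sum_congr rfl fun a _ => Finset.sum_congr rfl fun b _ => by ring

lemma sum_wedgeCL_wedgeCR_eq_wedge_rho {P Q : ℕ} {h : Evec n → Evec n → ℝ} (hh : IsBilin h)
    {ω : DF n P Q} (hω : IsDF ω) :
    ∑ i, ∑ j, h (ebasis n i) (ebasis n j) •
        wedgeCL (fun u => ⟪ebasis n i, u⟫) (wedgeCR (fun u => ⟪ebasis n j, u⟫) ω)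
      = fun x y =>
          wedge (rho h) ω (x ∘ Fin.cast (add_comm 1 P)) (y ∘ Fin.cast (add_comm 1 Q)) := by
  funext x y
  rw [sum_wedgeCL_wedgeCR_apply hh, wedge_rho_apply_cast h hω]

lemma sharp11_embDF_of_odd {P Q : ℕ} (hP : Odd P) (hQ : Odd Q) {h : Evec n → Evec n → ℝ}
    (hh : IsBilin h) {ω : DF n P Q} (hω : IsDF ω) :
    sharp11 h (embDF P Q ω) = (4 : ℝ) • embDF (1 + P) (1 + Q) (wedge (rho h) ω) := by
  rw [embDF_congr (add_comm 1 P) (add_comm 1 Q), ← sum_wedgeCL_wedgeCR_eq_wedge_rho hh hω]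
  simp only [sharp11, adRone_embDF_of_odd hQ, adLone_embDF_of_odd hP]
  simp only [wedgeCL_smul, embDF_sum, embDF_smul, Finset.smul_sum, smul_smul]
  norm_num [mul_comm]

end Exterior

/-- For a `(1,1)` double form `h` and a `(p,p)` double form `ω`:
if `p` is even then `h # ω = 4 ι_h ω` and if `p` is odd then `h # ω = 4 h·ω`. -/
theorem statement14 (n p : ℕ) (h : Evec n → Evec n → ℝ) (hh : IsBilin h)
    (ω : DF n p p) (hω : IsDF ω) :
    (Even p →
      sharp11 h (embDF p p ω) = (4 : ℝ) • embDF (p - 1) (p - 1) (iotaH h ω)) ∧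
    (Odd p →
      sharp11 h (embDF p p ω) = (4 : ℝ) • embDF (1 + p) (1 + p) (wedge (rho h) ω)) :=
  ⟨fun hp => sharp11_embDF_of_even hp hp h ω, fun hp => sharp11_embDF_of_odd hp hp hh hω⟩
end
end
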